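/- On V = ℝ^m (m = 2m̄ ≥ 4) with the standard inner product, standard basis {e_i}, and standard complex structure J, let A be the algebraic curvature tensor A(x,y,z,w) := (x₁y₂ − x₂y₁)(z₂w₁ − z₁w₂) (so A(e₁,e₂,e₂,e₁) = 1). With τ := Σ_{i,j} A(e_i,e_j,e_j,e_i), ρ(x,y) := Σ_i A(x,e_i,e_i,y), p₁A := (τ/(4m̄(m̄+1)))(π₁ + π₂), and p₂A := (1/(4(m̄+2)))(φ+ψ)(2ρ − (τ/m̄)⟨·,·⟩), the following hold: τ = 2; (p₁A)(e₃,e₄,e₄,e₃) = 2/(m̄(m̄+1)); (p₂A)(e₃,e₄,e₄,e₃) = −4/(m̄(m̄+2)); and (A − p₁A − p₂A)(e₃,e₄,e₄,e₃) ≠ 0. In particular all three quantities (p₁A)(e₃,e₄,e₄,e₃), (p₂A)(e₃,e₄,e₄,e₃), and (A − p₁A − p₂A)(e₃,e₄,e₄,e₃) are nonzero. -/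

import Mathlib

/-!
`A` only sees the coordinates along `e₁, e₂`, so `A(e₃,e₄,e₄,e₃) = 0`, while `τ = 2` and
`ρ` is the orthogonal projection onto `span{e₁, e₂}`. On a pair `(e_a, e_b)` with
`J e_a = e_b`, both `π₁ + π₂` and `(φ+ψ)(θ)` collapse to `4` resp. `4(θ(e_a,e_a) + θ(e_b,e_b))`,
giving `p₁A = 2/(n(n+1))` and `p₂A = −4/(n(n+2))` there. Their sum is not `0`, so the
remaining component `A − p₁A − p₂A = 2/((n+1)(n+2))` is nonzero too.
-/


namespace GeometricRealizationsStmt13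

noncomputable section

/-- The standard inner product on `ℝ^m`. -/
def ip {m : ℕ} (x y : Fin m → ℝ) : ℝ := ∑ i, x i * y i

/-- The standard complex structure on `ℝ^{2n}` (0-indexed): `J e_{2k} = e_{2k+1}`,
`J e_{2k+1} = -e_{2k}`. -/
def stdJ (n : ℕ) (x : Fin (2 * n) → ℝ) : Fin (2 * n) → ℝ := fun i =>
  if h : (i : ℕ) % 2 = 1 then x ⟨(i : ℕ) - 1, by have := i.isLt; omega⟩
  else - x ⟨(i : ℕ) + 1, by have := i.isLt; omega⟩

/-- The curvature tensor `A(x,y,z,w) = (x₁y₂ − x₂y₁)(z₂w₁ − z₁w₂)` (1-indexed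
coordinates; here `x₁ = x 0`, `x₂ = x 1`), so that `A(e₁,e₂,e₂,e₁) = 1`. -/
def A {n : ℕ} (hn : 2 ≤ n) (x y z w : Fin (2 * n) → ℝ) : ℝ :=
  (x ⟨0, by omega⟩ * y ⟨1, by omega⟩ - x ⟨1, by omega⟩ * y ⟨0, by omega⟩)
    * (z ⟨1, by omega⟩ * w ⟨0, by omega⟩ - z ⟨0, by omega⟩ * w ⟨1, by omega⟩)

/-- The standard basis vector `e_i` of `ℝ^m`. -/
def e {m : ℕ} (i : Fin m) : Fin m → ℝ := Pi.single i 1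

/-- The scalar curvature `τ = Σ_{i,j} A(e_i,e_j,e_j,e_i)`. -/
def tau {n : ℕ} (hn : 2 ≤ n) : ℝ := ∑ i : Fin (2 * n), ∑ j : Fin (2 * n), A hn (e i) (e j) (e j) (e i)

/-- The Ricci tensor `ρ(x,y) = Σ_i A(x,e_i,e_i,y)`. -/
def rho {n : ℕ} (hn : 2 ≤ n) (x y : Fin (2 * n) → ℝ) : ℝ := ∑ i : Fin (2 * n), A hn x (e i) (e i) y

/-- `π₁(x,y,z,w) = ⟨x,w⟩⟨y,z⟩ − ⟨x,z⟩⟨y,w⟩`. -/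
def pi1 {n : ℕ} (x y z w : Fin (2 * n) → ℝ) : ℝ := ip x w * ip y z - ip x z * ip y w

/-- `π₂(x,y,z,w) = ⟨Jx,w⟩⟨Jy,z⟩ − ⟨Jx,z⟩⟨Jy,w⟩ − 2⟨Jx,y⟩⟨Jz,w⟩`. -/
def pi2 {n : ℕ} (x y z w : Fin (2 * n) → ℝ) : ℝ :=
  ip (stdJ n x) w * ip (stdJ n y) z - ip (stdJ n x) z * ip (stdJ n y) w
    - 2 * ip (stdJ n x) y * ip (stdJ n z) w

/-- `θ = 2ρ − (τ/n)⟨·,·⟩`, the trace-free part input for `p₂`. -/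
def theta {n : ℕ} (hn : 2 ≤ n) (x y : Fin (2 * n) → ℝ) : ℝ :=
  2 * rho hn x y - (tau hn / (n : ℝ)) * ip x y

/-- `φ(θ)`. -/
def phi {n : ℕ} (θ : (Fin (2 * n) → ℝ) → (Fin (2 * n) → ℝ) → ℝ)
    (x y z w : Fin (2 * n) → ℝ) : ℝ :=
  ip x w * θ y z - ip x z * θ y w + θ x w * ip y z - θ x z * ip y w

/-- `ψ(θ)`. -/
def psi {n : ℕ} (θ : (Fin (2 * n) → ℝ) → (Fin (2 * n) → ℝ) → ℝ)
    (x y z w : Fin (2 * n) → ℝ) : ℝ :=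
  ip (stdJ n x) w * θ (stdJ n y) z - ip (stdJ n x) z * θ (stdJ n y) w
    - 2 * ip (stdJ n x) y * θ (stdJ n z) w
    + θ (stdJ n x) w * ip (stdJ n y) z - θ (stdJ n x) z * ip (stdJ n y) w
    - 2 * θ (stdJ n x) y * ip (stdJ n z) w

/-- The projection `p₁A = (τ/(4n(n+1)))(π₁ + π₂)`. -/
def p1A {n : ℕ} (hn : 2 ≤ n) (x y z w : Fin (2 * n) → ℝ) : ℝ :=
  (tau hn / (4 * (n : ℝ) * ((n : ℝ) + 1))) * (pi1 x y z w + pi2 x y z w)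

/-- The projection `p₂A = (1/(4(n+2)))(φ+ψ)(2ρ − (τ/n)⟨·,·⟩)`. -/
def p2A {n : ℕ} (hn : 2 ≤ n) (x y z w : Fin (2 * n) → ℝ) : ℝ :=
  (1 / (4 * ((n : ℝ) + 2))) * (phi (theta hn) x y z w + psi (theta hn) x y z w)

lemma ip_e_left {m : ℕ} (a : Fin m) (y : Fin m → ℝ) : ip (e a) y = y a := by
  simp [ip, e, Pi.single_apply]

lemma ip_neg_left {m : ℕ} (x y : Fin m → ℝ) : ip (-x) y = -ip x y := by
  simp [ip]

lemma stdJ_e_of_even {n : ℕ} {i j : Fin (2 * n)} (hi : (i : ℕ) % 2 = 0) (hj : (j : ℕ) = i + 1) :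
    stdJ n (e i) = e j := by
  funext k
  simp only [stdJ, e, Pi.single_apply, Fin.ext_iff]
  split_ifs <;> first | rfl | omega | simp

lemma stdJ_e_of_odd {n : ℕ} {i j : Fin (2 * n)} (hi : (i : ℕ) % 2 = 1) (hj : (i : ℕ) = j + 1) :
    stdJ n (e i) = -e j := by
  funext k
  simp only [stdJ, e, Pi.single_apply, Fin.ext_iff, Pi.neg_apply]
  split_ifs <;> first | rfl | omega | simp

lemma A_e_left_eq_zero {n : ℕ} (hn : 2 ≤ n) {a : Fin (2 * n)} (ha : 2 ≤ (a : ℕ))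
    (y z w : Fin (2 * n) → ℝ) : A hn (e a) y z w = 0 := by
  simp only [A, e, Pi.single_apply, Fin.ext_iff]
  rw [if_neg (by omega), if_neg (by omega)]
  ring

lemma rho_apply {n : ℕ} (hn : 2 ≤ n) (x y : Fin (2 * n) → ℝ) :
    rho hn x y = x ⟨0, by omega⟩ * y ⟨0, by omega⟩ + x ⟨1, by omega⟩ * y ⟨1, by omega⟩ := by
  rw [rho, Fintype.sum_eq_add ⟨0, by omega⟩ ⟨1, by omega⟩ (by simp [Fin.ext_iff])]
  · simp [A, e]
    ring
  · rintro i ⟨hi0, hi1⟩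
    simp [A, e, Ne.symm hi0, Ne.symm hi1]

lemma tau_eq_two {n : ℕ} (hn : 2 ≤ n) : tau hn = 2 := by
  change ∑ i, rho hn (e i) (e i) = 2
  norm_num [rho_apply, e, Pi.single_apply, Finset.sum_add_distrib]

lemma theta_neg_left {n : ℕ} (hn : 2 ≤ n) (x y : Fin (2 * n) → ℝ) :
    theta hn (-x) y = -theta hn x y := by
  simp only [theta, rho_apply, ip_neg_left, Pi.neg_apply]
  ring

lemma theta_e_self {n : ℕ} (hn : 2 ≤ n) {a : Fin (2 * n)} (ha : 2 ≤ (a : ℕ)) :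
    theta hn (e a) (e a) = -(2 / n) := by
  rw [theta, rho_apply, tau_eq_two, ip_e_left]
  simp only [e, Pi.single_apply, Fin.ext_iff]
  rw [if_neg (by omega), if_neg (by omega)]
  simp

lemma phi_ip_add_psi_ip {n : ℕ} (x y z w : Fin (2 * n) → ℝ) :
    phi ip x y z w + psi ip x y z w = 2 * (pi1 x y z w + pi2 x y z w) := by
  simp only [phi, psi, pi1, pi2]
  ring

section JPair

variable {n : ℕ} {a b : Fin (2 * n)}

lemma phi_add_psi_e_e_e_e (θ : (Fin (2 * n) → ℝ) → (Fin (2 * n) → ℝ) → ℝ)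
    (hθ : ∀ x y, θ (-x) y = -θ x y) (hab : a ≠ b)
    (ha : stdJ n (e a) = e b) (hb : stdJ n (e b) = -e a) :
    phi θ (e a) (e b) (e b) (e a) + psi θ (e a) (e b) (e b) (e a)
      = 4 * (θ (e a) (e a) + θ (e b) (e b)) := by
  simp only [phi, psi, ha, hb, hθ, ip_neg_left, ip_e_left]
  simp [e, hab, hab.symm]
  ring

lemma p1A_e_e_e_e (hn : 2 ≤ n) (hab : a ≠ b)
    (ha : stdJ n (e a) = e b) (hb : stdJ n (e b) = -e a) :
    p1A hn (e a) (e b) (e b) (e a) = 2 / (n * (n + 1)) := by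
  have hpi : pi1 (e a) (e b) (e b) (e a) + pi2 (e a) (e b) (e b) (e a) = 4 := by
    have := phi_add_psi_e_e_e_e ip ip_neg_left hab ha hb
    rw [phi_ip_add_psi_ip, ip_e_left, ip_e_left] at this
    simp only [e, Pi.single_eq_same] at this ⊢
    linarith
  have : (n : ℝ) ≠ 0 := by positivity
  rw [p1A, hpi, tau_eq_two]
  field_simp

lemma p2A_e_e_e_e (hn : 2 ≤ n) (ha₂ : 2 ≤ (a : ℕ)) (hb₂ : 2 ≤ (b : ℕ)) (hab : a ≠ b)
    (ha : stdJ n (e a) = e b) (hb : stdJ n (e b) = -e a) :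
    p2A hn (e a) (e b) (e b) (e a) = -(4 / (n * (n + 2))) := by
  rw [p2A, phi_add_psi_e_e_e_e _ (theta_neg_left hn) hab ha hb, theta_e_self hn ha₂,
    theta_e_self hn hb₂]
  have : (n : ℝ) ≠ 0 := by positivity
  field_simp
  ring

lemma A_sub_p1A_sub_p2A_e_e_e_e (hn : 2 ≤ n) (ha₂ : 2 ≤ (a : ℕ)) (hb₂ : 2 ≤ (b : ℕ))
    (hab : a ≠ b) (ha : stdJ n (e a) = e b) (hb : stdJ n (e b) = -e a) :
    A hn (e a) (e b) (e b) (e a) - p1A hn (e a) (e b) (e b) (e a) - p2A hn (e a) (e b) (e b) (e a)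
      = 2 / ((n + 1) * (n + 2)) := by
  rw [A_e_left_eq_zero hn ha₂, p1A_e_e_e_e hn hab ha hb, p2A_e_e_e_e hn ha₂ hb₂ hab ha hb]
  have : (n : ℝ) ≠ 0 := by positivity
  field_simp
  ring

end JPair

/-- The curvature tensor `A` of the Kaehler metric
`g = δ + ½(u₁² + u₂²)(du₁² + du₂²)` at the origin has nonzero components in each of the
three unitary summands `W₁ ⊕ W₂ ⊕ W₃` of the space of Kaehler curvature tensors:
`τ = 2`, `(p₁A)(e₃,e₄,e₄,e₃) = 2/(n(n+1))`, `(p₂A)(e₃,e₄,e₄,e₃) = −4/(n(n+2))`, and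
`((id − p₁ − p₂)A)(e₃,e₄,e₄,e₃) ≠ 0`; in particular all three are nonzero. -/
theorem projections_nonzero {n : ℕ} (hn : 2 ≤ n) :
    tau hn = 2 ∧
    p1A hn (e ⟨2, by omega⟩) (e ⟨3, by omega⟩) (e ⟨3, by omega⟩) (e ⟨2, by omega⟩)
      = 2 / ((n : ℝ) * ((n : ℝ) + 1)) ∧
    p2A hn (e ⟨2, by omega⟩) (e ⟨3, by omega⟩) (e ⟨3, by omega⟩) (e ⟨2, by omega⟩)
      = -(4 / ((n : ℝ) * ((n : ℝ) + 2))) ∧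
    A hn (e ⟨2, by omega⟩) (e ⟨3, by omega⟩) (e ⟨3, by omega⟩) (e ⟨2, by omega⟩)
      - p1A hn (e ⟨2, by omega⟩) (e ⟨3, by omega⟩) (e ⟨3, by omega⟩) (e ⟨2, by omega⟩)
      - p2A hn (e ⟨2, by omega⟩) (e ⟨3, by omega⟩) (e ⟨3, by omega⟩) (e ⟨2, by omega⟩) ≠ 0 ∧
    p1A hn (e ⟨2, by omega⟩) (e ⟨3, by omega⟩) (e ⟨3, by omega⟩) (e ⟨2, by omega⟩) ≠ 0 ∧
    p2A hn (e ⟨2, by omega⟩) (e ⟨3, by omega⟩) (e ⟨3, by omega⟩) (e ⟨2, by omega⟩) ≠ 0 := by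
  have hne : (⟨2, by omega⟩ : Fin (2 * n)) ≠ ⟨3, by omega⟩ := by simp
  have hJ₂ : stdJ n (e ⟨2, by omega⟩) = e ⟨3, by omega⟩ := stdJ_e_of_even (by simp) (by simp)
  have hJ₃ : stdJ n (e ⟨3, by omega⟩) = -e ⟨2, by omega⟩ := stdJ_e_of_odd (by simp) (by simp)
  have h₁ := p1A_e_e_e_e hn hne hJ₂ hJ₃
  have h₂ := p2A_e_e_e_e hn le_rfl (by simp) hne hJ₂ hJ₃
  have h₃ := A_sub_p1A_sub_p2A_e_e_e_e hn le_rfl (by simp) hne hJ₂ hJ₃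
  refine ⟨tau_eq_two hn, h₁, h₂, ?_, ?_, ?_⟩
  · rw [h₃]; positivity
  · rw [h₁]; positivity
  · rw [h₂, neg_ne_zero]; positivity

end

end GeometricRealizationsStmt13
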